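/- Consider the implicit midpoint method applied to the index-1 DAE q̇ = ∇_p H(q,p,λ), ṗ = −∇_q H(q,p,λ), 0 = ∇_λ H(q,p,λ), where ∇_λ H(q,p,·) = 0 has a unique smooth solution λ = λ̃(q,p). Then (q₁, p₁, Λ) satisfies the midpoint equations (q₁−q₀)/Δt = ∇_p H(Q̄, P̄, Λ), (p₁−p₀)/Δt = −∇_q H(Q̄, P̄, Λ), 0 = ∇_λ H(Q̄, P̄, Λ) with Q̄ = (q₀+q₁)/2, P̄ = (p₀+p₁)/2, if and only if Λ = λ̃(Q̄, P̄) and (q₁, p₁) is the implicit midpoint step for the reduced Hamiltonian H̃(q,p) = H(q,p,λ̃(q,p)) applied at (q₀,p₀). -/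

import Mathlib

open Matrix

/-- The Euclidean gradient of `f : ℝ^d → ℝ` at `x`, as a vector. -/
noncomputable def grad {d : ℕ} (f : (Fin d → ℝ) → ℝ) (x : Fin d → ℝ) : Fin d → ℝ :=
  fun i => fderiv ℝ f x (Pi.single i 1)

lemma clm_eq_zero_of_single {k : ℕ} (T : (Fin k → ℝ) →L[ℝ] ℝ)
    (h : ∀ i, T (Pi.single i 1) = 0) : T = 0 := by
  ext w
  have hw : w = ∑ i, Pi.single i (w i) := (Finset.univ_sum_single w).symm
  rw [hw, map_sum]
  simp only [ContinuousLinearMap.zero_apply]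
  refine Finset.sum_eq_zero fun i _ => ?_
  have : Pi.single i (w i) = w i • (Pi.single i 1 : Fin k → ℝ) := by
    funext j
    simp [Pi.single_apply, mul_ite]
  rw [this, _root_.map_smul, h i, smul_zero]

lemma fderiv_lam_zero {n k : ℕ}
    (H : (Fin n → ℝ) → (Fin n → ℝ) → (Fin k → ℝ) → ℝ)
    (lamt : (Fin n → ℝ) → (Fin n → ℝ) → Fin k → ℝ)
    (hconstr : ∀ q p, grad (fun l => H q p l) (lamt q p) = 0)
    (q p : Fin n → ℝ) :
    fderiv ℝ (fun l => H q p l) (lamt q p) = 0 := by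
  apply clm_eq_zero_of_single
  intro i
  exact congrFun (hconstr q p) i

lemma envelope_q {n k : ℕ}
    (H : (Fin n → ℝ) → (Fin n → ℝ) → (Fin k → ℝ) → ℝ)
    (hH : ContDiff ℝ (⊤ : ℕ∞) fun x : (Fin n → ℝ) × (Fin n → ℝ) × (Fin k → ℝ) =>
      H x.1 x.2.1 x.2.2)
    (lamt : (Fin n → ℝ) → (Fin n → ℝ) → Fin k → ℝ)
    (hlamt : ContDiff ℝ (⊤ : ℕ∞) fun x : (Fin n → ℝ) × (Fin n → ℝ) => lamt x.1 x.2)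
    (hconstr : ∀ q p, grad (fun l => H q p l) (lamt q p) = 0)
    (q p : Fin n → ℝ) :
    fderiv ℝ (fun q' => H q' p (lamt q' p)) q =
    fderiv ℝ (fun q' => H q' p (lamt q p)) q := by
  have hGd : Differentiable ℝ (fun x : (Fin n → ℝ) × (Fin n → ℝ) × (Fin k → ℝ) => H x.1 x.2.1 x.2.2) :=
    hH.differentiable (by simp)
  have hld : Differentiable ℝ (fun x : (Fin n → ℝ) × (Fin n → ℝ) => lamt x.1 x.2) :=
    hlamt.differentiable (by simp)
  set DG := fderiv ℝ (fun x : (Fin n → ℝ) × (Fin n → ℝ) × (Fin k → ℝ) => H x.1 x.2.1 x.2.2) (q, p, lamt q p) with hDG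
  have hG : HasFDerivAt (fun x : (Fin n → ℝ) × (Fin n → ℝ) × (Fin k → ℝ) => H x.1 x.2.1 x.2.2) DG (q, p, lamt q p) :=
    (hGd _).hasFDerivAt
  have hlq : DifferentiableAt ℝ (fun q' : Fin n → ℝ => lamt q' p) q :=
    by have := (hld (q, p)).comp q ((differentiableAt_id (𝕜 := ℝ) (x := q)).prodMk (differentiableAt_const p)); exact this
  set L := fderiv ℝ (fun q' : Fin n → ℝ => lamt q' p) q with hL
  have hl : HasFDerivAt (fun q' : Fin n → ℝ => lamt q' p) L q := hlq.hasFDerivAt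
  have hφ : HasFDerivAt (fun q' : Fin n → ℝ => ((q' , (p, lamt q' p)) : (Fin n → ℝ) × (Fin n → ℝ) × (Fin k → ℝ)))
      ((ContinuousLinearMap.id ℝ (Fin n → ℝ)).prod ((0 : (Fin n → ℝ) →L[ℝ] (Fin n → ℝ)).prod L)) q :=
    HasFDerivAt.prodMk (hasFDerivAt_id q) (HasFDerivAt.prodMk (hasFDerivAt_const p q) hl)
  have hψ : HasFDerivAt (fun q' : Fin n → ℝ => ((q' , (p, lamt q p)) : (Fin n → ℝ) × (Fin n → ℝ) × (Fin k → ℝ)))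
      ((ContinuousLinearMap.id ℝ (Fin n → ℝ)).prod ((0 : (Fin n → ℝ) →L[ℝ] (Fin n → ℝ)).prod (0 : (Fin n → ℝ) →L[ℝ] (Fin k → ℝ)))) q :=
    HasFDerivAt.prodMk (hasFDerivAt_id q) (HasFDerivAt.prodMk (hasFDerivAt_const p q) (hasFDerivAt_const (lamt q p) q))
  have hcomp1 : HasFDerivAt (fun q' => H q' p (lamt q' p))
      (DG.comp ((ContinuousLinearMap.id ℝ (Fin n → ℝ)).prod ((0 : (Fin n → ℝ) →L[ℝ] (Fin n → ℝ)).prod L))) q :=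
    (hG.comp q hφ :)
  have hcomp2 : HasFDerivAt (fun q' => H q' p (lamt q p))
      (DG.comp ((ContinuousLinearMap.id ℝ (Fin n → ℝ)).prod ((0 : (Fin n → ℝ) →L[ℝ] (Fin n → ℝ)).prod (0 : (Fin n → ℝ) →L[ℝ] (Fin k → ℝ))))) q :=
    (hG.comp q hψ :)
  have hχ : HasFDerivAt (fun l : Fin k → ℝ => ((q, (p, l)) : (Fin n → ℝ) × (Fin n → ℝ) × (Fin k → ℝ)))
      ((0 : (Fin k → ℝ) →L[ℝ] (Fin n → ℝ)).prod ((0 : (Fin k → ℝ) →L[ℝ] (Fin n → ℝ)).prod (ContinuousLinearMap.id ℝ (Fin k → ℝ)))) (lamt q p) :=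
    HasFDerivAt.prodMk (hasFDerivAt_const q _) (HasFDerivAt.prodMk (hasFDerivAt_const p _) (hasFDerivAt_id _))
  have hcomp3 : HasFDerivAt (fun l : Fin k → ℝ => H q p l)
      (DG.comp ((0 : (Fin k → ℝ) →L[ℝ] (Fin n → ℝ)).prod ((0 : (Fin k → ℝ) →L[ℝ] (Fin n → ℝ)).prod (ContinuousLinearMap.id ℝ (Fin k → ℝ))))) (lamt q p) :=
    (hG.comp (lamt q p) hχ :)
  have hz : ∀ w : Fin k → ℝ, DG ((0 : Fin n → ℝ), (0 : Fin n → ℝ), w) = 0 := by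
    intro w
    have h3 := hcomp3.fderiv
    have h0 : fderiv ℝ (fun l : Fin k → ℝ => H q p l) (lamt q p) = 0 :=
      fderiv_lam_zero H lamt hconstr q p
    have := congrFun (congrArg DFunLike.coe (h3.symm.trans h0)) w
    simpa using this
  rw [hcomp1.fderiv, hcomp2.fderiv]
  ext v
  simp only [ContinuousLinearMap.comp_apply, ContinuousLinearMap.prod_apply,
    ContinuousLinearMap.id_apply, ContinuousLinearMap.zero_apply]
  have hsplit : ((v, (0 : Fin n → ℝ), L v) : (Fin n → ℝ) × (Fin n → ℝ) × (Fin k → ℝ))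
      = (v, (0 : Fin n → ℝ), (0 : Fin k → ℝ)) + ((0 : Fin n → ℝ), (0 : Fin n → ℝ), L v) := by
    simp [Prod.ext_iff]
  rw [hsplit, map_add, hz (L v), add_zero]

lemma envelope_p {n k : ℕ}
    (H : (Fin n → ℝ) → (Fin n → ℝ) → (Fin k → ℝ) → ℝ)
    (hH : ContDiff ℝ (⊤ : ℕ∞) fun x : (Fin n → ℝ) × (Fin n → ℝ) × (Fin k → ℝ) =>
      H x.1 x.2.1 x.2.2)
    (lamt : (Fin n → ℝ) → (Fin n → ℝ) → Fin k → ℝ)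
    (hlamt : ContDiff ℝ (⊤ : ℕ∞) fun x : (Fin n → ℝ) × (Fin n → ℝ) => lamt x.1 x.2)
    (hconstr : ∀ q p, grad (fun l => H q p l) (lamt q p) = 0)
    (q p : Fin n → ℝ) :
    fderiv ℝ (fun p' => H q p' (lamt q p')) p =
    fderiv ℝ (fun p' => H q p' (lamt q p)) p := by
  have hGd : Differentiable ℝ (fun x : (Fin n → ℝ) × (Fin n → ℝ) × (Fin k → ℝ) => H x.1 x.2.1 x.2.2) :=
    hH.differentiable (by simp)
  have hld : Differentiable ℝ (fun x : (Fin n → ℝ) × (Fin n → ℝ) => lamt x.1 x.2) :=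
    hlamt.differentiable (by simp)
  set DG := fderiv ℝ (fun x : (Fin n → ℝ) × (Fin n → ℝ) × (Fin k → ℝ) => H x.1 x.2.1 x.2.2) (q, p, lamt q p) with hDG
  have hG : HasFDerivAt (fun x : (Fin n → ℝ) × (Fin n → ℝ) × (Fin k → ℝ) => H x.1 x.2.1 x.2.2) DG (q, p, lamt q p) :=
    (hGd _).hasFDerivAt
  have hlq : DifferentiableAt ℝ (fun p' : Fin n → ℝ => lamt q p') p :=
    by have := (hld (q, p)).comp p ((differentiableAt_const q).prodMk differentiableAt_id); exact this
  set L := fderiv ℝ (fun p' : Fin n → ℝ => lamt q p') p with hL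
  have hl : HasFDerivAt (fun p' : Fin n → ℝ => lamt q p') L p := hlq.hasFDerivAt
  have hφ : HasFDerivAt (fun p' : Fin n → ℝ => ((q, (p', lamt q p')) : (Fin n → ℝ) × (Fin n → ℝ) × (Fin k → ℝ)))
      ((0 : (Fin n → ℝ) →L[ℝ] (Fin n → ℝ)).prod ((ContinuousLinearMap.id ℝ (Fin n → ℝ)).prod L)) p :=
    HasFDerivAt.prodMk (hasFDerivAt_const q p) (HasFDerivAt.prodMk (hasFDerivAt_id p) hl)
  have hψ : HasFDerivAt (fun p' : Fin n → ℝ => ((q, (p', lamt q p)) : (Fin n → ℝ) × (Fin n → ℝ) × (Fin k → ℝ)))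
      ((0 : (Fin n → ℝ) →L[ℝ] (Fin n → ℝ)).prod ((ContinuousLinearMap.id ℝ (Fin n → ℝ)).prod (0 : (Fin n → ℝ) →L[ℝ] (Fin k → ℝ)))) p :=
    HasFDerivAt.prodMk (hasFDerivAt_const q p) (HasFDerivAt.prodMk (hasFDerivAt_id p) (hasFDerivAt_const (lamt q p) p))
  have hcomp1 : HasFDerivAt (fun p' => H q p' (lamt q p'))
      (DG.comp ((0 : (Fin n → ℝ) →L[ℝ] (Fin n → ℝ)).prod ((ContinuousLinearMap.id ℝ (Fin n → ℝ)).prod L))) p :=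
    (hG.comp p hφ :)
  have hcomp2 : HasFDerivAt (fun p' => H q p' (lamt q p))
      (DG.comp ((0 : (Fin n → ℝ) →L[ℝ] (Fin n → ℝ)).prod ((ContinuousLinearMap.id ℝ (Fin n → ℝ)).prod (0 : (Fin n → ℝ) →L[ℝ] (Fin k → ℝ))))) p :=
    (hG.comp p hψ :)
  have hχ : HasFDerivAt (fun l : Fin k → ℝ => ((q, (p, l)) : (Fin n → ℝ) × (Fin n → ℝ) × (Fin k → ℝ)))
      ((0 : (Fin k → ℝ) →L[ℝ] (Fin n → ℝ)).prod ((0 : (Fin k → ℝ) →L[ℝ] (Fin n → ℝ)).prod (ContinuousLinearMap.id ℝ (Fin k → ℝ)))) (lamt q p) :=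
    HasFDerivAt.prodMk (hasFDerivAt_const q _) (HasFDerivAt.prodMk (hasFDerivAt_const p _) (hasFDerivAt_id _))
  have hcomp3 : HasFDerivAt (fun l : Fin k → ℝ => H q p l)
      (DG.comp ((0 : (Fin k → ℝ) →L[ℝ] (Fin n → ℝ)).prod ((0 : (Fin k → ℝ) →L[ℝ] (Fin n → ℝ)).prod (ContinuousLinearMap.id ℝ (Fin k → ℝ))))) (lamt q p) :=
    (hG.comp (lamt q p) hχ :)
  have hz : ∀ w : Fin k → ℝ, DG ((0 : Fin n → ℝ), (0 : Fin n → ℝ), w) = 0 := by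
    intro w
    have h3 := hcomp3.fderiv
    have h0 : fderiv ℝ (fun l : Fin k → ℝ => H q p l) (lamt q p) = 0 :=
      fderiv_lam_zero H lamt hconstr q p
    have := congrFun (congrArg DFunLike.coe (h3.symm.trans h0)) w
    simpa using this
  rw [hcomp1.fderiv, hcomp2.fderiv]
  ext v
  simp only [ContinuousLinearMap.comp_apply, ContinuousLinearMap.prod_apply,
    ContinuousLinearMap.id_apply, ContinuousLinearMap.zero_apply]
  have hsplit : (((0 : Fin n → ℝ), v, L v) : (Fin n → ℝ) × (Fin n → ℝ) × (Fin k → ℝ))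
      = ((0 : Fin n → ℝ), v, (0 : Fin k → ℝ)) + ((0 : Fin n → ℝ), (0 : Fin n → ℝ), L v) := by
    simp [Prod.ext_iff]
  rw [hsplit, map_add, hz (L v), add_zero]

/-- The implicit midpoint method applied to the index-1 DAE
`q̇ = ∇_p H, ṗ = −∇_q H, 0 = ∇_λ H` is equivalent to the implicit midpoint method
for the reduced Hamiltonian `H̃(q,p) = H(q,p,λ̃(q,p))`, with stage multiplier
`Λ = λ̃(Q̄,P̄)` the exact multiplier at the midpoint. -/
theorem stmt10 {n k : ℕ}
    (H : (Fin n → ℝ) → (Fin n → ℝ) → (Fin k → ℝ) → ℝ)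
    (hH : ContDiff ℝ (⊤ : ℕ∞) fun x : (Fin n → ℝ) × (Fin n → ℝ) × (Fin k → ℝ) =>
      H x.1 x.2.1 x.2.2)
    (lamt : (Fin n → ℝ) → (Fin n → ℝ) → Fin k → ℝ)
    (hlamt : ContDiff ℝ (⊤ : ℕ∞) fun x : (Fin n → ℝ) × (Fin n → ℝ) => lamt x.1 x.2)
    (hconstr : ∀ q p, grad (fun l => H q p l) (lamt q p) = 0)
    (huniq : ∀ q p l, grad (fun l' => H q p l') l = 0 → l = lamt q p)
    (Htilde : (Fin n → ℝ) → (Fin n → ℝ) → ℝ)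
    (hHt : ∀ q p, Htilde q p = H q p (lamt q p))
    (Δt : ℝ) (hΔt : Δt ≠ 0)
    (q₀ p₀ q₁ p₁ : Fin n → ℝ) (Lam : Fin k → ℝ)
    (Qbar Pbar : Fin n → ℝ)
    (hQ : Qbar = (2⁻¹ : ℝ) • (q₀ + q₁)) (hP : Pbar = (2⁻¹ : ℝ) • (p₀ + p₁)) :
    (Δt⁻¹ • (q₁ - q₀) = grad (fun p' => H Qbar p' Lam) Pbar ∧
     Δt⁻¹ • (p₁ - p₀) = -(grad (fun q' => H q' Pbar Lam) Qbar) ∧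
     grad (fun l => H Qbar Pbar l) Lam = 0)
    ↔
    (Lam = lamt Qbar Pbar ∧
     Δt⁻¹ • (q₁ - q₀) = grad (fun p' => Htilde Qbar p') Pbar ∧
     Δt⁻¹ • (p₁ - p₀) = -(grad (fun q' => Htilde q' Pbar) Qbar)) := by
  have hgq : grad (fun q' => Htilde q' Pbar) Qbar
      = grad (fun q' => H q' Pbar (lamt Qbar Pbar)) Qbar := by
    have hfun : (fun q' => Htilde q' Pbar) = (fun q' => H q' Pbar (lamt q' Pbar)) := by
      funext q'; exact hHt q' Pbar
    funext i
    simp only [grad, hfun]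
    rw [envelope_q H hH lamt hlamt hconstr Qbar Pbar]
  have hgp : grad (fun p' => Htilde Qbar p') Pbar
      = grad (fun p' => H Qbar p' (lamt Qbar Pbar)) Pbar := by
    have hfun : (fun p' => Htilde Qbar p') = (fun p' => H Qbar p' (lamt Qbar p')) := by
      funext p'; exact hHt Qbar p'
    funext i
    simp only [grad, hfun]
    rw [envelope_p H hH lamt hlamt hconstr Qbar Pbar]
  constructor
  · rintro ⟨h1, h2, h3⟩
    have hLam : Lam = lamt Qbar Pbar := huniq Qbar Pbar Lam h3
    subst hLam
    exact ⟨rfl, by rw [hgp]; exact h1, by rw [hgq]; exact h2⟩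
  · rintro ⟨hLam, h1, h2⟩
    subst hLam
    refine ⟨by rw [hgp] at h1; exact h1, by rw [hgq] at h2; exact h2, hconstr Qbar Pbar⟩
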